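/- arXiv:2101.11219 — 2 statements merged into one kernel-verified Lean document; each statement's English description precedes it below -/
import Mathlib

section
/- Let ω be a positive integer and let h : ℝ × [0, T) → ℝ be smooth and 2ωπ-periodic in θ, with k := 1/(h_{θθ} + h) positive and h_t = k_{θθ} + k. Then d/dt ∫₀^{2ωπ} (h_θ)² dθ = -2 ∫₀^{2ωπ} (k_θ/k)² dθ. In particular the Dirichlet energy of the support function is non-increasing. -/
open Real
open MeasureTheory intervalIntegral
local notation "∞'" => ((⊤:ℕ∞) : WithTop ℕ∞)

noncomputable def pd1 (f : ℝ × ℝ → ℝ) : ℝ × ℝ → ℝ := fun p => fderiv ℝ f p (1, 0)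
noncomputable def pd2 (f : ℝ × ℝ → ℝ) : ℝ × ℝ → ℝ := fun p => fderiv ℝ f p (0, 1)

lemma pd1_contDiff {f : ℝ × ℝ → ℝ} (hf : ContDiff ℝ ∞' f) : ContDiff ℝ ∞' (pd1 f) :=
  (hf.fderiv_right (by simp)).clm_apply contDiff_const

lemma pd2_contDiff {f : ℝ × ℝ → ℝ} (hf : ContDiff ℝ ∞' f) : ContDiff ℝ ∞' (pd2 f) :=
  (hf.fderiv_right (by simp)).clm_apply contDiff_const

lemma pd1_spec {f : ℝ × ℝ → ℝ} (hf : ContDiff ℝ ∞' f) (θ t : ℝ) :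
    HasDerivAt (fun x => f (x, t)) (pd1 f (θ, t)) θ := by
  have h1 : HasDerivAt (fun x : ℝ => ((x, t) : ℝ × ℝ)) ((1:ℝ), (0:ℝ)) θ :=
    (hasDerivAt_id θ).prodMk (hasDerivAt_const θ t)
  exact ((hf.differentiable (by simp) (θ, t)).hasFDerivAt.comp_hasDerivAt θ h1)

lemma pd2_spec {f : ℝ × ℝ → ℝ} (hf : ContDiff ℝ ∞' f) (θ t : ℝ) :
    HasDerivAt (fun s => f (θ, s)) (pd2 f (θ, t)) t := by
  have h1 : HasDerivAt (fun s : ℝ => ((θ, s) : ℝ × ℝ)) ((0:ℝ), (1:ℝ)) t :=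
    (hasDerivAt_const t θ).prodMk (hasDerivAt_id t)
  exact ((hf.differentiable (by simp) (θ, t)).hasFDerivAt.comp_hasDerivAt t h1)

lemma pd_comm {f : ℝ × ℝ → ℝ} (hf : ContDiff ℝ ∞' f) (p : ℝ × ℝ) :
    pd2 (pd1 f) p = pd1 (pd2 f) p := by
  have hd : DifferentiableAt ℝ (fderiv ℝ f) p :=
    ((hf.fderiv_right (m := 1) (by decide)).differentiable (by simp)) p
  have key : ∀ v w : ℝ × ℝ, fderiv ℝ (fun q => fderiv ℝ f q v) p w
      = fderiv ℝ (fderiv ℝ f) p w v := by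
    intro v w
    rw [fderiv_clm_apply hd (differentiableAt_const v)]
    simp
  have hsym := ((hf.contDiffAt (x := p)).isSymmSndFDerivAt (by simp [minSmoothness_of_isRCLikeNormedField]; exact WithTop.coe_le_coe.mpr le_top)) (0,1) (1,0)
  show fderiv ℝ (fun q => fderiv ℝ f q (1,0)) p (0,1)
      = fderiv ℝ (fun q => fderiv ℝ f q (0,1)) p (1,0)
  rw [key, key]
  exact hsym

lemma deriv_contDiff {g : ℝ → ℝ} (hg : ContDiff ℝ ∞' g) : ContDiff ℝ ∞' (deriv g) :=
  (contDiff_infty_iff_deriv.mp hg).2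

lemma periodic_deriv' {f : ℝ → ℝ} {c : ℝ} (hf : ∀ x, f (x + c) = f x) (x : ℝ) :
    deriv f (x + c) = deriv f x := by
  have hfc : (fun y => f (y + c)) = f := funext hf
  rw [← deriv_comp_add_const, hfc]

lemma parts_periodic {P : ℝ} (u v u' v' : ℝ → ℝ)
    (hu : ∀ x, HasDerivAt u (u' x) x) (hv : ∀ x, HasDerivAt v (v' x) x)
    (hu' : Continuous u') (hv' : Continuous v')
    (huP : u P = u 0) (hvP : v P = v 0) :
    ∫ x in (0:ℝ)..P, u x * v' x = - ∫ x in (0:ℝ)..P, u' x * v x := by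
  have hcu : Continuous u :=
    Differentiable.continuous (fun x => (hu x).differentiableAt)
  have hcv : Continuous v :=
    Differentiable.continuous (fun x => (hv x).differentiableAt)
  have hint : ∫ x in (0:ℝ)..P, (u' x * v x + u x * v' x) = u P * v P - u 0 * v 0 := by
    apply intervalIntegral.integral_deriv_mul_eq_sub_of_hasDerivAt hcu.continuousOn
      hcv.continuousOn (fun x _ => hu x) (fun x _ => hv x)
      (hu'.intervalIntegrable _ _) (hv'.intervalIntegrable _ _)
  rw [intervalIntegral.integral_add (f := fun x => u' x * v x) (g := fun x => u x * v' x) ((hu'.mul hcv).intervalIntegrable _ _)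
      ((hcu.mul hv').intervalIntegrable _ _), huP, hvP] at hint
  linarith

lemma hasDerivAt_param_integral {P : ℝ} {G G' : ℝ × ℝ → ℝ}
    (hG : Continuous G) (hG' : Continuous G')
    (hdiff : ∀ x s, HasDerivAt (fun s => G (x, s)) (G' (x, s)) s) (t₀ : ℝ) :
    HasDerivAt (fun s => ∫ x in (0:ℝ)..P, G (x, s)) (∫ x in (0:ℝ)..P, G' (x, t₀)) t₀ := by
  obtain ⟨C, hC⟩ := ((isCompact_uIcc (a := (0:ℝ)) (b := P)).prod
    (isCompact_closedBall t₀ 1)).exists_bound_of_continuousOn hG'.continuousOn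
  have hmeas : ∀ s : ℝ, Continuous (fun x => G (x, s)) := fun s =>
    hG.comp (continuous_id.prodMk continuous_const)
  have hmeas' : ∀ s : ℝ, Continuous (fun x => G' (x, s)) := fun s =>
    hG'.comp (continuous_id.prodMk continuous_const)
  exact (intervalIntegral.hasDerivAt_integral_of_dominated_loc_of_deriv_le
      (F := fun s x => G (x, s)) (F' := fun s x => G' (x, s)) (bound := fun _ => C)
      (Metric.ball_mem_nhds t₀ one_pos)
      (Filter.Eventually.of_forall fun s => (hmeas s).aestronglyMeasurable)
      ((hmeas t₀).intervalIntegrable _ _)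
      (hmeas' t₀).aestronglyMeasurable
      (Filter.Eventually.of_forall fun x hx => fun s hs =>
        hC (x, s) ⟨Set.uIoc_subset_uIcc hx, Metric.ball_subset_closedBall hs⟩)
      intervalIntegrable_const
      (Filter.Eventually.of_forall fun x _ => fun s _ => hdiff x s)).2

lemma endpoint {g : ℝ → ℝ} {P : ℝ} (hg : ∀ x, g (x + P) = g x) : g P = g 0 := by
  simpa using hg 0

theorem dirichlet_energy_monotone (ω : ℕ) (hω : 0 < ω) (T : ℝ) (hT : 0 < T)
    (h k : ℝ → ℝ → ℝ)
    (hs : ContDiff ℝ (⊤ : ℕ∞) (Function.uncurry h))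
    (hper : ∀ t θ, h (θ + 2*ω*π) t = h θ t)
    (hk : ∀ θ t, k θ t = 1 / (deriv (deriv (fun x => h x t)) θ + h θ t))
    (hkpos : ∀ θ, ∀ t ∈ Set.Ico (0:ℝ) T, 0 < k θ t)
    (hev : ∀ θ, ∀ t ∈ Set.Ico (0:ℝ) T,
      deriv (fun s => h θ s) t = deriv (deriv (fun x => k x t)) θ + k θ t) :
    (∀ t ∈ Set.Ico (0:ℝ) T,
      deriv (fun s => ∫ θ in (0:ℝ)..(2*ω*π), (deriv (fun x => h x s) θ)^2) t
        = -2 * ∫ θ in (0:ℝ)..(2*ω*π), (deriv (fun x => k x t) θ / k θ t)^2) ∧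
    AntitoneOn (fun t => ∫ θ in (0:ℝ)..(2*ω*π), (deriv (fun x => h x t) θ)^2)
      (Set.Ico 0 T) := by
  have hA : ContDiff ℝ ∞' (Function.uncurry h) := hs.of_le (by simp)
  set A := Function.uncurry h with hAdef
  set P : ℝ := 2*ω*π with hPdef
  have hωR : (0:ℝ) < ω := by exact_mod_cast hω
  have hP : 0 < P := by rw [hPdef]; positivity
  -- identifications of derivatives
  have e1 : ∀ t θ, deriv (fun x => h x t) θ = pd1 A (θ, t) := fun t θ =>
    (pd1_spec hA θ t).deriv
  have e2 : ∀ t, deriv (fun x => h x t) = fun θ => pd1 A (θ, t) := fun t => funext (e1 t)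
  have e3 : ∀ t θ, deriv (deriv (fun x => h x t)) θ = pd1 (pd1 A) (θ, t) := by
    intro t θ
    rw [e2 t]
    exact (pd1_spec (pd1_contDiff hA) θ t).deriv
  have e4 : ∀ θ t, deriv (fun s => h θ s) t = pd2 A (θ, t) := fun θ t =>
    (pd2_spec hA θ t).deriv
  -- continuity of partials
  have c1 : ∀ t : ℝ, Continuous (fun x => pd1 A (x, t)) := fun t =>
    (pd1_contDiff hA).continuous.comp (continuous_id.prodMk continuous_const)
  have c11 : ∀ t : ℝ, Continuous (fun x => pd1 (pd1 A) (x, t)) := fun t =>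
    (pd1_contDiff (pd1_contDiff hA)).continuous.comp (continuous_id.prodMk continuous_const)
  have c2 : ∀ t : ℝ, Continuous (fun x => pd2 A (x, t)) := fun t =>
    (pd2_contDiff hA).continuous.comp (continuous_id.prodMk continuous_const)
  have c12 : ∀ t : ℝ, Continuous (fun x => pd1 (pd2 A) (x, t)) := fun t =>
    (pd1_contDiff (pd2_contDiff hA)).continuous.comp (continuous_id.prodMk continuous_const)
  -- periodicity
  have per0 : ∀ t x, h (x + P) t = h x t := fun t x => hper t x
  have per1 : ∀ t x, pd1 A (x + P, t) = pd1 A (x, t) := by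
    intro t x
    have := periodic_deriv' (f := fun x => h x t) (c := P) (per0 t) x
    rwa [e1, e1] at this
  have per11 : ∀ t x, pd1 (pd1 A) (x + P, t) = pd1 (pd1 A) (x, t) := by
    intro t x
    have := periodic_deriv' (f := fun x => pd1 A (x, t)) (c := P) (per1 t) x
    rwa [(pd1_spec (pd1_contDiff hA) (x + P) t).deriv,
      (pd1_spec (pd1_contDiff hA) x t).deriv] at this
  have per2 : ∀ t x, pd2 A (x + P, t) = pd2 A (x, t) := by
    intro t x
    have hfun : (fun s => h (x + P) s) = fun s => h x s := funext fun s => hper s x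
    rw [← e4, ← e4, hfun]
  have per12 : ∀ t x, pd1 (pd2 A) (x + P, t) = pd1 (pd2 A) (x, t) := by
    intro t x
    have := periodic_deriv' (f := fun x => pd2 A (x, t)) (c := P) (per2 t) x
    rwa [(pd1_spec (pd2_contDiff hA) (x + P) t).deriv,
      (pd1_spec (pd2_contDiff hA) x t).deriv] at this
  -- the energy functional and its derivative
  set E : ℝ → ℝ := fun s => ∫ θ in (0:ℝ)..P, (pd1 A (θ, s))^2 with hEdef
  set D : ℝ → ℝ := fun s => ∫ θ in (0:ℝ)..P, 2 * pd1 A (θ, s) * pd2 (pd1 A) (θ, s) with hDdef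
  have hEeq : (fun s => ∫ θ in (0:ℝ)..P, (deriv (fun x => h x s) θ)^2) = E := by
    funext s
    exact intervalIntegral.integral_congr fun θ _ => by rw [e1]
  have key : ∀ s₀ : ℝ, HasDerivAt E (D s₀) s₀ := by
    intro s₀
    apply hasDerivAt_param_integral
      (G := fun p => (pd1 A p)^2) (G' := fun p => 2 * pd1 A p * pd2 (pd1 A) p)
      ((pd1_contDiff hA).continuous.pow 2)
      ((continuous_const.mul (pd1_contDiff hA).continuous).mul (pd2_contDiff (pd1_contDiff hA)).continuous)
    intro x s
    have hd := pd2_spec (pd1_contDiff hA) x s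
    simpa using hd.fun_pow 2
  -- main identity at a fixed time
  have main : ∀ t ∈ Set.Ico (0:ℝ) T,
      D t = -2 * ∫ θ in (0:ℝ)..P, (deriv (fun x => k x t) θ / k θ t)^2 := by
    intro t ht
    -- basic facts about k at time t
    have hKc : ∀ x, k x t = 1 / (pd1 (pd1 A) (x, t) + h x t) := fun x => by
      rw [hk x t, e3]
    have hKpos : ∀ x, 0 < k x t := fun x => hkpos x t ht
    have hKne : ∀ x, k x t ≠ 0 := fun x => (hKpos x).ne'
    have hdne : ∀ x, pd1 (pd1 A) (x, t) + h x t ≠ 0 := by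
      intro x hx
      have h0 := hKpos x
      rw [hKc x, hx] at h0
      simp at h0
    have hdK : ∀ x, 1 / k x t = pd1 (pd1 A) (x, t) + h x t := fun x => by
      rw [hKc x, one_div_one_div]
    have hdK2 : ∀ x, pd1 (pd1 A) (x, t) = 1 / k x t - h x t := fun x => by
      have := hdK x; linarith
    -- smoothness of k at time t
    have hf1 : ContDiff ℝ ∞' (fun x => h x t) := hA.comp (contDiff_id.prodMk contDiff_const)
    have hd1 : ContDiff ℝ ∞' (fun x => pd1 (pd1 A) (x, t) + h x t) :=
      ((pd1_contDiff (pd1_contDiff hA)).comp (contDiff_id.prodMk contDiff_const)).add hf1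
    have hKfun : (fun x => k x t) = fun x => 1 / (pd1 (pd1 A) (x, t) + h x t) := funext hKc
    have hK1 : ContDiff ℝ ∞' (fun x => k x t) := by
      rw [hKfun]; exact contDiff_const.div hd1 hdne
    have hK'1 : ContDiff ℝ ∞' (deriv (fun x => k x t)) := deriv_contDiff hK1
    have hK''1 : ContDiff ℝ ∞' (deriv (deriv (fun x => k x t))) := deriv_contDiff hK'1
    have cK : Continuous (fun x => k x t) := hK1.continuous
    have cK' : Continuous (deriv (fun x => k x t)) := hK'1.continuous
    have cK'' : Continuous (deriv (deriv (fun x => k x t))) := hK''1.continuous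
    have cf : Continuous (fun x => h x t) := hf1.continuous
    have hKd : ∀ x, HasDerivAt (fun y => k y t) (deriv (fun y => k y t) x) x := fun x =>
      (hK1.differentiable (by simp) x).hasDerivAt
    have hK'd : ∀ x, HasDerivAt (deriv (fun y => k y t)) (deriv (deriv (fun y => k y t)) x) x :=
      fun x => (hK'1.differentiable (by simp) x).hasDerivAt
    -- periodicity at time t
    have perh : ∀ x, h (x + P) t = h x t := per0 t
    have perK : ∀ x, k (x + P) t = k x t := fun x => by
      rw [hKc, hKc, per11 t x, perh x]
    have perK' : ∀ x, deriv (fun y => k y t) (x + P) = deriv (fun y => k y t) x :=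
      periodic_deriv' perK
    -- step 1 : symmetry of second derivatives
    have step1 : D t = ∫ x in (0:ℝ)..P, (2 * pd1 A (x, t)) * pd1 (pd2 A) (x, t) := by
      simp only [hDdef]
      exact intervalIntegral.integral_congr fun x _ => by rw [pd_comm hA]
    -- step 2 : integration by parts
    have step2 : ∫ x in (0:ℝ)..P, (2 * pd1 A (x, t)) * pd1 (pd2 A) (x, t)
        = - ∫ x in (0:ℝ)..P, (2 * pd1 (pd1 A) (x, t)) * pd2 A (x, t) :=
      parts_periodic _ _ _ _
        (fun x => (pd1_spec (pd1_contDiff hA) x t).const_mul 2)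
        (fun x => pd1_spec (pd2_contDiff hA) x t)
        (continuous_const.mul (c11 t)) (c12 t)
        (endpoint (g := fun x => 2 * pd1 A (x, t)) fun x => by simp only [per1 t x])
        (endpoint (g := fun x => pd2 A (x, t)) fun x => by simp only [per2 t x])
    -- step 3 : substitute the evolution equation and the curvature relation
    have step3 : ∫ x in (0:ℝ)..P, (2 * pd1 (pd1 A) (x, t)) * pd2 A (x, t)
        = 2 * ∫ x in (0:ℝ)..P,
            (1 / k x t - h x t) * (deriv (deriv (fun y => k y t)) x + k x t) := by
      rw [← intervalIntegral.integral_const_mul]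
      refine intervalIntegral.integral_congr fun x _ => ?_
      rw [hdK2 x, ← e4 x t, hev x t ht]
      ring
    -- derivative of 1/k
    have hg1d : ∀ x, HasDerivAt (fun y => 1 / k y t)
        (-(deriv (fun y => k y t) x) / (k x t)^2) x := by
      intro x
      have h0 := (hasDerivAt_const x (1:ℝ)).fun_div (hKd x) (hKne x)
      exact h0.congr_deriv (by ring)
    have cw : Continuous (fun x => -(deriv (fun y => k y t) x) / (k x t)^2) :=
      cK'.neg.div (cK.pow 2) fun x => pow_ne_zero 2 (hKne x)
    have cg1 : Continuous (fun x => 1 / k x t) := continuous_const.div cK hKne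
    -- J1 : ∫ (1/k) k'' = ∫ (k'/k)^2
    have J1 : ∫ x in (0:ℝ)..P, (1 / k x t) * deriv (deriv (fun y => k y t)) x
        = - ∫ x in (0:ℝ)..P, (-(deriv (fun y => k y t) x) / (k x t)^2)
            * deriv (fun y => k y t) x :=
      parts_periodic _ _ _ _ hg1d hK'd cw cK''
        (endpoint (g := fun x => 1 / k x t) fun x => by simp only [perK x])
        (endpoint (g := deriv (fun y => k y t)) fun x => perK' x)
    have J1' : - ∫ x in (0:ℝ)..P, (-(deriv (fun y => k y t) x) / (k x t)^2)
            * deriv (fun y => k y t) x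
        = ∫ x in (0:ℝ)..P, (deriv (fun y => k y t) x / k x t)^2 := by
      rw [← intervalIntegral.integral_neg]
      refine intervalIntegral.integral_congr fun x _ => ?_
      rw [div_pow]
      field_simp
    -- J2 : ∫ h k'' = - ∫ h' k'
    have J2 : ∫ x in (0:ℝ)..P, h x t * deriv (deriv (fun y => k y t)) x
        = - ∫ x in (0:ℝ)..P, pd1 A (x, t) * deriv (fun y => k y t) x :=
      parts_periodic _ _ _ _
        (fun x => pd1_spec hA x t) hK'd (c1 t) cK''
        (endpoint (g := fun x => h x t) fun x => perh x)
        (endpoint (g := deriv (fun y => k y t)) fun x => perK' x)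
    -- J3 : ∫ h' k' = - ∫ h'' k
    have J3 : ∫ x in (0:ℝ)..P, pd1 A (x, t) * deriv (fun y => k y t) x
        = - ∫ x in (0:ℝ)..P, pd1 (pd1 A) (x, t) * k x t :=
      parts_periodic _ _ _ _
        (fun x => pd1_spec (pd1_contDiff hA) x t) hKd (c11 t) cK'
        (endpoint (g := fun x => pd1 A (x, t)) fun x => per1 t x)
        (endpoint (g := fun x => k x t) fun x => perK x)
    -- J4 : ∫ h'' k = ∫ (1 - h k)
    have J4 : ∫ x in (0:ℝ)..P, pd1 (pd1 A) (x, t) * k x t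
        = ∫ x in (0:ℝ)..P, (1 - h x t * k x t) := by
      refine intervalIntegral.integral_congr fun x _ => ?_
      rw [hdK2 x, sub_mul, one_div_mul_cancel (hKne x)]
    -- J5 : ∫ (1 - h k) = P - ∫ h k
    have J5 : ∫ x in (0:ℝ)..P, (1 - h x t * k x t)
        = P - ∫ x in (0:ℝ)..P, h x t * k x t := by
      rw [intervalIntegral.integral_sub (f := fun _ => (1:ℝ)) (g := fun x => h x t * k x t) intervalIntegrable_const
        ((cf.mul cK).intervalIntegrable _ _)]
      simp
    -- expansion of the main integrand
    have expand : ∫ x in (0:ℝ)..P,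
          (1 / k x t - h x t) * (deriv (deriv (fun y => k y t)) x + k x t)
        = (∫ x in (0:ℝ)..P, (1 / k x t) * deriv (deriv (fun y => k y t)) x)
          + ((P - 0) - ((∫ x in (0:ℝ)..P, h x t * deriv (deriv (fun y => k y t)) x)
            + ∫ x in (0:ℝ)..P, h x t * k x t)) := by
      have hone : ∫ x in (0:ℝ)..P, (1:ℝ) = P - 0 := by simp
      rw [← hone]
      rw [← intervalIntegral.integral_add (f := fun x => h x t * deriv (deriv fun y => k y t) x) (g := fun x => h x t * k x t) ((cf.mul cK'').intervalIntegrable _ _)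
        ((cf.mul cK).intervalIntegrable _ _)]
      rw [← intervalIntegral.integral_sub (f := fun _ => (1:ℝ)) (g := fun x => h x t * deriv (deriv fun y => k y t) x + h x t * k x t) intervalIntegrable_const
        (((cf.mul cK'').add (cf.mul cK)).intervalIntegrable _ _)]
      rw [← intervalIntegral.integral_add (f := fun x => 1 / k x t * deriv (deriv fun y => k y t) x) (g := fun x => 1 - (h x t * deriv (deriv fun y => k y t) x + h x t * k x t)) ((cg1.mul cK'').intervalIntegrable _ _)
        ((_root_.intervalIntegrable_const).sub (((cf.mul cK'').add (cf.mul cK)).intervalIntegrable _ _))]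
      refine intervalIntegral.integral_congr fun x _ => ?_
      have hx := hKne x
      field_simp
      ring
    -- put everything together
    have core : ∫ x in (0:ℝ)..P,
          (1 / k x t - h x t) * (deriv (deriv (fun y => k y t)) x + k x t)
        = ∫ x in (0:ℝ)..P, (deriv (fun y => k y t) x / k x t)^2 := by
      rw [expand]
      rw [J1, J1'] ; linarith [J2, J3, J4, J5]
    rw [step1, step2, step3, core]
    ring
  constructor
  · intro t ht
    rw [hEeq]
    rw [(key t).deriv]
    exact main t ht
  · apply antitoneOn_of_deriv_nonpos (convex_Ico 0 T)
    · rw [hEeq]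
      exact fun s _ => ((key s).differentiableAt).continuousAt.continuousWithinAt
    · rw [hEeq, interior_Ico]
      exact fun s _ => ((key s).differentiableAt).differentiableWithinAt
    · intro x hx
      rw [interior_Ico] at hx
      have hx' : x ∈ Set.Ico (0:ℝ) T := Set.Ioo_subset_Ico_self hx
      rw [hEeq, (key x).deriv, main x hx']
      have hnn : 0 ≤ ∫ θ in (0:ℝ)..P, (deriv (fun y => k y x) θ / k θ x)^2 :=
        intervalIntegral.integral_nonneg hP.le fun θ _ => sq_nonneg _
      nlinarith
end

section
/- Let ω be a positive integer and let k : ℝ × [0, T) → ℝ be a smooth positive 2ωπ-periodic (in θ) function satisfying k_t = -k²(F_{θθ} + F) with F = k_{θθ} + k. Then d/dt ∫₀^{2ωπ} k dθ = -2∫ k (k_{θθ})² dθ - 2∫ k² k_{θθ} dθ - ∫ k³ dθ, and consequently d/dt ∫₀^{2ωπ} k dθ ≤ -(1/2)∫ k (k_{θθ})² dθ - (1/3)∫ k³ dθ ≤ 0. -/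
open Real MeasureTheory intervalIntegral Set

private abbrev sm : WithTop ℕ∞ := ((⊤:ℕ∞) : WithTop ℕ∞)

private lemma per_deriv {f : ℝ → ℝ} {c : ℝ} (hf : Function.Periodic f c) :
    Function.Periodic (deriv f) c := fun x => by
  have h : (fun y => f (y + c)) = f := funext hf
  rw [← deriv_comp_add_const, h]

private lemma cd_deriv {f : ℝ → ℝ} (hf : ContDiff ℝ sm f) : ContDiff ℝ sm (deriv f) :=
  (contDiff_infty_iff_deriv.mp hf).2

private lemma integral_deriv_per {L : ℝ} {f : ℝ → ℝ} (hf : ContDiff ℝ sm f)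
    (hfp : Function.Periodic f L) : ∫ x in (0:ℝ)..L, deriv f x = 0 := by
  rw [intervalIntegral.integral_deriv_eq_sub (fun x _ => hf.differentiable (by norm_num) x)
    ((cd_deriv hf).continuous.intervalIntegrable _ _)]
  have := hfp 0
  rw [zero_add] at this
  rw [this, sub_self]

private lemma ibp_periodic {L : ℝ} {u v : ℝ → ℝ}
    (hu : ContDiff ℝ sm u) (hv : ContDiff ℝ sm v)
    (hup : Function.Periodic u L) (hvp : Function.Periodic v L) :
    ∫ x in (0:ℝ)..L, u x * deriv v x = - ∫ x in (0:ℝ)..L, deriv u x * v x := by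
  have hu' := cd_deriv hu
  have hv' := cd_deriv hv
  have key := intervalIntegral.integral_deriv_mul_eq_sub
    (a := 0) (b := L) (u := u) (v := v) (u' := deriv u) (v' := deriv v)
    (fun x _ => (hu.differentiable (by norm_num) x).hasDerivAt)
    (fun x _ => (hv.differentiable (by norm_num) x).hasDerivAt)
    (hu'.continuous.intervalIntegrable _ _) (hv'.continuous.intervalIntegrable _ _)
  have hend : u L * v L - u 0 * v 0 = 0 := by
    have h1 := hup 0; have h2 := hvp 0
    rw [zero_add] at h1 h2
    rw [h1, h2, sub_self]
  rw [intervalIntegral.integral_add (f := fun x => deriv u x * v x) (g := fun x => u x * deriv v x)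
      ((hu'.continuous.mul hv.continuous).intervalIntegrable _ _)
      ((hu.continuous.mul hv'.continuous).intervalIntegrable _ _), hend] at key
  linarith

private lemma hdiff {f : ℝ → ℝ} (hf : ContDiff ℝ sm f) : Differentiable ℝ f :=
  hf.differentiable (by norm_num)

private lemma key {L : ℝ} {g : ℝ → ℝ} (hg : ContDiff ℝ sm g) (hgp : Function.Periodic g L) :
    ∫ θ in (0:ℝ)..L, (g θ)^2 * deriv (deriv (deriv (deriv g))) θ
      = 2 * ∫ θ in (0:ℝ)..L, g θ * (deriv (deriv g) θ)^2 := by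
  set g1 : ℝ → ℝ := deriv g with hg1d
  set g2 : ℝ → ℝ := deriv g1 with hg2d
  set g3 : ℝ → ℝ := deriv g2 with hg3d
  have hg1 : ContDiff ℝ sm g1 := cd_deriv hg
  have hg2 : ContDiff ℝ sm g2 := cd_deriv hg1
  have hg3 : ContDiff ℝ sm g3 := cd_deriv hg2
  have hg1p : Function.Periodic g1 L := per_deriv hgp
  have hg2p : Function.Periodic g2 L := per_deriv hg1p
  have hg3p : Function.Periodic g3 L := per_deriv hg2p
  -- first IBP
  have hu : ContDiff ℝ sm (fun θ => (g θ)^2) := hg.pow 2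
  have hup : Function.Periodic (fun θ => (g θ)^2) L := fun x => by simp [hgp x]
  have step1 : ∫ θ in (0:ℝ)..L, (g θ)^2 * deriv g3 θ
      = - ∫ θ in (0:ℝ)..L, deriv (fun θ => (g θ)^2) θ * g3 θ :=
    ibp_periodic hu hg3 hup hg3p
  have hdu : deriv (fun θ => (g θ)^2) = fun θ => 2 * g θ * g1 θ := by
    funext θ
    have := ((hdiff hg θ).hasDerivAt.pow 2).deriv
    show deriv (g ^ 2) θ = _; rw [this, hg1d]; norm_num
  -- second IBP
  have hv : ContDiff ℝ sm (fun θ => 2 * g θ * g1 θ) := (contDiff_const.mul hg).mul hg1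
  have hvp : Function.Periodic (fun θ => 2 * g θ * g1 θ) L := fun x => by
    simp [hgp x, hg1p x]
  have step2 : ∫ θ in (0:ℝ)..L, (2 * g θ * g1 θ) * deriv g2 θ
      = - ∫ θ in (0:ℝ)..L, deriv (fun θ => 2 * g θ * g1 θ) θ * g2 θ :=
    ibp_periodic hv hg2 hvp hg2p
  have hdv : deriv (fun θ => 2 * g θ * g1 θ)
      = fun θ => 2 * g1 θ * g1 θ + 2 * g θ * g2 θ := by
    funext θ
    have h1 : HasDerivAt (fun θ => 2 * g θ) (2 * g1 θ) θ :=
      ((hdiff hg θ).hasDerivAt).const_mul 2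
    have h2 : HasDerivAt (fun θ => (2 * g θ) * g1 θ)
        (2 * g1 θ * g1 θ + 2 * g θ * g2 θ) θ := h1.mul (hdiff hg1 θ).hasDerivAt
    exact h2.deriv
  -- cubic term vanishes
  have step3 : ∫ θ in (0:ℝ)..L, (g1 θ)^2 * g2 θ = 0 := by
    have h0 : ∀ θ ∈ Set.uIcc (0:ℝ) L,
        HasDerivAt (fun θ => (g1 θ)^3 / 3) ((g1 θ)^2 * g2 θ) θ := by
      intro θ _
      have := ((hdiff hg1 θ).hasDerivAt.pow 3).div_const 3
      replace this : HasDerivAt (fun θ => (g1 θ)^3 / 3) _ θ := this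
      convert this using 1
      push_cast
      ring
    rw [intervalIntegral.integral_eq_sub_of_hasDerivAt h0
      (((hg1.continuous.pow 2).mul hg2.continuous).intervalIntegrable _ _)]
    have := hg1p 0
    rw [zero_add] at this
    rw [this, sub_self]
  -- assemble
  rw [step1, hdu, step2, hdv, neg_neg]
  have hsplit : ∫ θ in (0:ℝ)..L, (2 * g1 θ * g1 θ + 2 * g θ * g2 θ) * g2 θ
      = (∫ θ in (0:ℝ)..L, 2 * ((g1 θ)^2 * g2 θ))
        + ∫ θ in (0:ℝ)..L, 2 * (g θ * (g2 θ)^2) := by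
    rw [← intervalIntegral.integral_add (f := fun θ => 2 * ((g1 θ)^2 * g2 θ)) (g := fun θ => 2 * (g θ * (g2 θ)^2))
      ((continuous_const.mul ((hg1.continuous.pow 2).mul hg2.continuous)).intervalIntegrable _ _)
      ((continuous_const.mul (hg.continuous.mul (hg2.continuous.pow 2))).intervalIntegrable _ _)]
    apply intervalIntegral.integral_congr
    intro θ _
    ring
  rw [hsplit, intervalIntegral.integral_const_mul, intervalIntegral.integral_const_mul,
    step3, mul_zero, zero_add]

theorem length_concavity (ω : ℕ) (hω : 0 < ω) (T : ℝ) (hT : 0 < T)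
    (k F : ℝ → ℝ → ℝ)
    (hs : ContDiff ℝ (⊤ : ℕ∞) (Function.uncurry k))
    (hper : ∀ t θ, k (θ + 2*ω*π) t = k θ t)
    (hkpos : ∀ θ, ∀ t ∈ Set.Ico (0:ℝ) T, 0 < k θ t)
    (hF : ∀ θ t, F θ t = deriv (deriv (fun x => k x t)) θ + k θ t)
    (hev : ∀ θ, ∀ t ∈ Set.Ico (0:ℝ) T,
      deriv (fun s => k θ s) t
        = -(k θ t)^2 * (deriv (deriv (fun x => F x t)) θ + F θ t)) :
    ∀ t ∈ Set.Ico (0:ℝ) T,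
      deriv (fun s => ∫ θ in (0:ℝ)..(2*ω*π), k θ s) t
        = -2 * (∫ θ in (0:ℝ)..(2*ω*π), k θ t * (deriv (deriv (fun x => k x t)) θ)^2)
          - 2 * (∫ θ in (0:ℝ)..(2*ω*π), (k θ t)^2 * deriv (deriv (fun x => k x t)) θ)
          - (∫ θ in (0:ℝ)..(2*ω*π), (k θ t)^3)
      ∧ deriv (fun s => ∫ θ in (0:ℝ)..(2*ω*π), k θ s) t
          ≤ -(1/2) * (∫ θ in (0:ℝ)..(2*ω*π), k θ t * (deriv (deriv (fun x => k x t)) θ)^2)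
            - (1/3) * (∫ θ in (0:ℝ)..(2*ω*π), (k θ t)^3)
      ∧ deriv (fun s => ∫ θ in (0:ℝ)..(2*ω*π), k θ s) t ≤ 0 := by
  have hs' : ContDiff ℝ sm (Function.uncurry k) := hs.of_le (by simp)
  intro t ht
  set L : ℝ := 2*ω*π with hLd
  -- slice in θ
  set g : ℝ → ℝ := fun x => k x t with hgd
  have hg : ContDiff ℝ sm g :=
    hs'.comp (contDiff_id.prodMk contDiff_const)
  have hgp : Function.Periodic g L := fun x => hper t x
  have hgpos : ∀ θ, 0 < g θ := fun θ => hkpos θ t ht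
  set g1 : ℝ → ℝ := deriv g with hg1d
  set g2 : ℝ → ℝ := deriv g1 with hg2d
  have hg1 : ContDiff ℝ sm g1 := cd_deriv hg
  have hg2 : ContDiff ℝ sm g2 := cd_deriv hg1
  have hg3 : ContDiff ℝ sm (deriv g2) := cd_deriv hg2
  have hg4 : ContDiff ℝ sm (deriv (deriv g2)) := cd_deriv hg3
  -- partial t-derivative
  set pd : ℝ × ℝ → ℝ := fun p => fderiv ℝ (Function.uncurry k) p (0, 1) with hpdd
  have hpd : ∀ θ x, HasDerivAt (fun s => k θ s) (pd (θ, x)) x := by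
    intro θ x
    have h1 : HasFDerivAt (Function.uncurry k) (fderiv ℝ (Function.uncurry k) (θ, x)) (θ, x) :=
      (hs'.differentiable (by norm_num) (θ, x)).hasFDerivAt
    have h2 : HasDerivAt (fun s : ℝ => ((θ : ℝ), s)) ((0 : ℝ), (1 : ℝ)) x :=
      (hasDerivAt_const x θ).prodMk (hasDerivAt_id x)
    exact h1.comp_hasDerivAt x h2
  have hpdc : Continuous pd := by
    have := (hs'.continuous_fderiv (by norm_num))
    exact this.clm_apply continuous_const
  -- derivative under integral sign
  obtain ⟨C, hC⟩ := ((isCompact_uIcc (a := (0:ℝ)) (b := L)).prod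
    (isCompact_closedBall t 1)).exists_bound_of_continuousOn hpdc.continuousOn
  have hDI : HasDerivAt (fun s => ∫ θ in (0:ℝ)..L, k θ s)
      (∫ θ in (0:ℝ)..L, pd (θ, t)) t := by
    refine (intervalIntegral.hasDerivAt_integral_of_dominated_loc_of_deriv_le
      (F := fun s θ => k θ s) (F' := fun s θ => pd (θ, s)) (bound := fun _ => C)
      (s := Metric.ball t 1) (Metric.ball_mem_nhds t one_pos) ?_ ?_ ?_ ?_ ?_ ?_).2
    · filter_upwards with s
      exact (hs'.continuous.comp (continuous_id.prodMk continuous_const)).aestronglyMeasurable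
    · exact (hs'.continuous.comp (continuous_id.prodMk continuous_const)).intervalIntegrable _ _
    · exact (hpdc.comp (continuous_id.prodMk continuous_const)).aestronglyMeasurable
    · filter_upwards with θ hθ x hx
      exact hC (θ, x) ⟨uIoc_subset_uIcc hθ, Metric.ball_subset_closedBall hx⟩
    · exact intervalIntegrable_const
    · filter_upwards with θ hθ x hx
      exact hpd θ x
  -- identify the integrand on [0, T)
  have hInt : ∀ θ, pd (θ, t) = -(g θ)^2 * (deriv (deriv g2) θ + 2 * g2 θ + g θ) := by
    intro θ
    have h1 : pd (θ, t) = deriv (fun s => k θ s) t := ((hpd θ t).deriv).symm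
    rw [h1, hev θ t ht]
    have hFf : (fun x => F x t) = fun x => g2 x + g x := by
      funext x; rw [hF x t]
    rw [hFf, hF θ t]
    have hd1 : deriv (fun x => g2 x + g x) = fun x => deriv g2 x + g1 x := by
      funext x
      rw [deriv_fun_add (hdiff hg2 x) (hdiff hg x)]
    have hd2 : deriv (deriv (fun x => g2 x + g x)) θ = deriv (deriv g2) θ + g2 θ := by
      rw [hd1, deriv_fun_add (hdiff hg3 θ) (hdiff hg1 θ)]
    rw [hd2]
    change -(g θ)^2 * (deriv (deriv g2) θ + g2 θ + (g2 θ + g θ)) = _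
    ring_nf
  have hD : deriv (fun s => ∫ θ in (0:ℝ)..L, k θ s) t = ∫ θ in (0:ℝ)..L, pd (θ, t) :=
    hDI.deriv
  -- integrabilities
  have hi1 : IntervalIntegrable (fun θ => (g θ)^2 * deriv (deriv g2) θ) volume 0 L :=
    ((hg.continuous.pow 2).mul hg4.continuous).intervalIntegrable _ _
  have hi2 : IntervalIntegrable (fun θ => (g θ)^2 * g2 θ) volume 0 L :=
    ((hg.continuous.pow 2).mul hg2.continuous).intervalIntegrable _ _
  have hi3 : IntervalIntegrable (fun θ => (g θ)^3) volume 0 L :=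
    (hg.continuous.pow 3).intervalIntegrable _ _
  have hiA : IntervalIntegrable (fun θ => g θ * (g2 θ)^2) volume 0 L :=
    (hg.continuous.mul (hg2.continuous.pow 2)).intervalIntegrable _ _
  -- split the integral
  have hsplit : ∫ θ in (0:ℝ)..L, pd (θ, t)
      = (-1) * (∫ θ in (0:ℝ)..L, (g θ)^2 * deriv (deriv g2) θ)
        + (-2) * (∫ θ in (0:ℝ)..L, (g θ)^2 * g2 θ)
        + (-1) * (∫ θ in (0:ℝ)..L, (g θ)^3) := by
    have e0 : ∫ θ in (0:ℝ)..L, pd (θ, t)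
        = ∫ θ in (0:ℝ)..L, ((-1) * ((g θ)^2 * deriv (deriv g2) θ)
            + (-2) * ((g θ)^2 * g2 θ) + (-1) * ((g θ)^3)) := by
      apply intervalIntegral.integral_congr
      intro θ _
      simp only [hInt θ]
      ring
    rw [e0,
      intervalIntegral.integral_add ((hi1.const_mul (-1)).add (hi2.const_mul (-2)))
        (hi3.const_mul (-1)),
      intervalIntegral.integral_add (hi1.const_mul (-1)) (hi2.const_mul (-2)),
      intervalIntegral.integral_const_mul, intervalIntegral.integral_const_mul,
      intervalIntegral.integral_const_mul]
  -- key IBP identity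
  have hkey := key hg hgp
  rw [← hg1d, ← hg2d] at hkey
  set A : ℝ := ∫ θ in (0:ℝ)..L, g θ * (g2 θ)^2 with hAd
  set B : ℝ := ∫ θ in (0:ℝ)..L, (g θ)^2 * g2 θ with hBd
  set C : ℝ := ∫ θ in (0:ℝ)..L, (g θ)^3 with hCd
  have hE : deriv (fun s => ∫ θ in (0:ℝ)..L, k θ s) t = -2*A - 2*B - C := by
    rw [hD, hsplit, hkey]
    ring
  have hL : (0:ℝ) < L := by
    have h1 : (0:ℝ) < (ω:ℝ) := by exact_mod_cast hω
    have := pi_pos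
    rw [hLd]; positivity
  -- pointwise Cauchy inequality, integrated
  have hineq : -2*B ≤ (3/2)*A + (2/3)*C := by
    have hmono : ∫ θ in (0:ℝ)..L, (-2) * ((g θ)^2 * g2 θ)
        ≤ ∫ θ in (0:ℝ)..L, ((3/2) * (g θ * (g2 θ)^2) + (2/3) * (g θ)^3) := by
      apply intervalIntegral.integral_mono_on hL.le (hi2.const_mul _)
        (((hiA.const_mul _)).add ((hi3.const_mul _)))
      intro θ _
      nlinarith [sq_nonneg (3 * g2 θ + 2 * g θ), (hgpos θ).le,
        mul_pos (hgpos θ) (hgpos θ)]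
    rw [intervalIntegral.integral_const_mul] at hmono
    rw [intervalIntegral.integral_add (hiA.const_mul _) (hi3.const_mul _),
      intervalIntegral.integral_const_mul, intervalIntegral.integral_const_mul] at hmono
    linarith [hmono]
  have hA0 : 0 ≤ A := by
    rw [hAd]
    apply intervalIntegral.integral_nonneg hL.le
    intro θ _
    have := (hgpos θ).le
    positivity
  have hC0 : 0 ≤ C := by
    rw [hCd]
    apply intervalIntegral.integral_nonneg hL.le
    intro θ _
    have := (hgpos θ).le
    positivity
  -- conclude
  refine ⟨?_, ?_, ?_⟩
  · show deriv (fun s => ∫ θ in (0:ℝ)..L, k θ s) t = -2*A - 2*B - C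
    exact hE
  · show deriv (fun s => ∫ θ in (0:ℝ)..L, k θ s) t ≤ -(1/2)*A - (1/3)*C
    rw [hE]; linarith
  · rw [hE]; linarith
end
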